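/- Let r be a real number, B > 0, T > 0, and σ : ℝ → ℝ continuous with w(t) = ∫_t^T σ(s)² ds > 0 for all t ∈ (0,T). Define x₁(v,t) = (log(v/B) + r(T−t) + w(t)/2)/√(w(t)), x₂(v,t) = x₁(v,t) − √(w(t)), and G(v,t) = B e^{−r(T−t)} Φ(−x₂(v,t)) − v Φ(−x₁(v,t)). Then G satisfies (1/2)σ(t)² v² G_vv(v,t) + r v G_v(v,t) + G_t(v,t) − r G(v,t) = 0 for all (v,t) ∈ (0,∞) × (0,T). -/

import Mathlib

open Real Set Filter

/-- The standard normal cumulative distribution function. -/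
noncomputable def Phi (x : ℝ) : ℝ :=
  (Real.sqrt (2 * Real.pi))⁻¹ * ∫ y in Set.Iic x, Real.exp (-(y ^ 2) / 2)

open MeasureTheory intervalIntegral

lemma integrable_gauss : MeasureTheory.Integrable (fun y : ℝ => Real.exp (-(y ^ 2) / 2)) := by
  have h := integrable_exp_neg_mul_sq (b := (1:ℝ)/2) (by norm_num)
  have he : (fun y : ℝ => Real.exp (-(y ^ 2) / 2)) = fun y : ℝ => Real.exp (-(1/2 : ℝ) * y ^ 2) := by
    funext y; ring_nf
  rw [he]; exact h

lemma hasDerivAt_Phi (x : ℝ) :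
    HasDerivAt Phi ((Real.sqrt (2 * Real.pi))⁻¹ * Real.exp (-(x ^ 2) / 2)) x := by
  have hint : ∀ z : ℝ, (∫ y in Set.Iic z, Real.exp (-(y ^ 2) / 2)) =
      (∫ y in Set.Iic 0, Real.exp (-(y ^ 2) / 2)) + ∫ y in (0:ℝ)..z, Real.exp (-(y ^ 2) / 2) := by
    intro z
    rw [← integral_Iic_sub_Iic integrable_gauss.integrableOn integrable_gauss.integrableOn]
    ring
  have heq : Phi = fun z => (Real.sqrt (2 * Real.pi))⁻¹ *
      ((∫ y in Set.Iic 0, Real.exp (-(y ^ 2) / 2)) + ∫ y in (0:ℝ)..z, Real.exp (-(y ^ 2) / 2)) := by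
    funext z; rw [Phi, hint z]
  rw [heq]
  have hc : Continuous (fun y : ℝ => Real.exp (-(y ^ 2) / 2)) :=
    Real.continuous_exp.comp (((continuous_pow 2).neg).div_const 2)
  have hftc : HasDerivAt (fun z : ℝ => ∫ y in (0:ℝ)..z, Real.exp (-(y ^ 2) / 2))
      (Real.exp (-(x ^ 2) / 2)) x :=
    integral_hasDerivAt_right (hc.intervalIntegrable _ _)
      (hc.stronglyMeasurableAtFilter _ _) hc.continuousAt
  exact ((hftc.const_add _).const_mul _)

/-- The loan-guarantee value
`G(v,t) = B e^{-r(T-t)} Φ(-x₂) - v Φ(-x₁)` satisfies the backward parabolic RPDE. -/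
theorem guarantee_formula_satisfies_rpde
    (r B T : ℝ) (hB : 0 < B) (hT : 0 < T)
    (σ : ℝ → ℝ) (hσ : Continuous σ)
    (w : ℝ → ℝ) (hw : ∀ t, w t = ∫ s in t..T, (σ s) ^ 2)
    (hwpos : ∀ t ∈ Set.Ioo (0 : ℝ) T, 0 < w t)
    (x₁ x₂ : ℝ → ℝ → ℝ)
    (hx₁ : ∀ v t, x₁ v t =
      (Real.log (v / B) + r * (T - t) + w t / 2) / Real.sqrt (w t))
    (hx₂ : ∀ v t, x₂ v t = x₁ v t - Real.sqrt (w t))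
    (G : ℝ → ℝ → ℝ)
    (hG : ∀ v t, G v t =
      B * Real.exp (-r * (T - t)) * Phi (-(x₂ v t)) - v * Phi (-(x₁ v t))) :
    ∀ v ∈ Set.Ioi (0 : ℝ), ∀ t ∈ Set.Ioo (0 : ℝ) T,
        (1 / 2) * (σ t) ^ 2 * v ^ 2 *
            deriv (fun v' => deriv (fun v'' => G v'' t) v') v
          + r * v * deriv (fun v' => G v' t) v
          + deriv (fun t' => G v t') t
          - r * G v t = 0 := by
  intro v hv t ht
  obtain ⟨ht0, htT⟩ := ht
  have hv0 : (0:ℝ) < v := hv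
  have hW : 0 < w t := hwpos t ⟨ht0, htT⟩
  have hs0 : 0 < Real.sqrt (w t) := Real.sqrt_pos.mpr hW
  have hss : Real.sqrt (w t) * Real.sqrt (w t) = w t := Real.mul_self_sqrt hW.le
  set c := (Real.sqrt (2 * Real.pi))⁻¹ with hcdef
  -- key identity
  have key : ∀ y : ℝ, 0 < y →
      B * Real.exp (-r * (T - t)) * Real.exp (-(x₂ y t) ^ 2 / 2)
        = y * Real.exp (-(x₁ y t) ^ 2 / 2) := by
    intro y hy
    have hxs : x₁ y t * Real.sqrt (w t) = Real.log (y / B) + r * (T - t) + w t / 2 := by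
      rw [hx₁]; field_simp
    have hsq : -(x₂ y t) ^ 2 / 2 = -(x₁ y t) ^ 2 / 2 + (Real.log (y / B) + r * (T - t)) := by
      rw [hx₂]; linear_combination hxs - hss / 2
    rw [hsq, Real.exp_add, Real.exp_add, Real.exp_log (div_pos hy hB)]
    have h1 : Real.exp (-r * (T - t)) * Real.exp (r * (T - t)) = 1 := by
      rw [← Real.exp_add, show -r * (T - t) + r * (T - t) = 0 by ring, Real.exp_zero]
    have hBy : B * (y / B) = y := by field_simp
    linear_combination B * (y / B) * Real.exp (-(x₁ y t) ^ 2 / 2) * h1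
      + Real.exp (-(x₁ y t) ^ 2 / 2) * hBy
  -- v-derivative of x₁, x₂
  have hx1v : ∀ y : ℝ, 0 < y → HasDerivAt (fun v' => x₁ v' t) (1 / (y * Real.sqrt (w t))) y := by
    intro y hy
    have hdiv : HasDerivAt (fun v' : ℝ => v' / B) (1 / B) y := (hasDerivAt_id y).div_const B
    have hlog : HasDerivAt (fun v' : ℝ => Real.log (v' / B)) (1 / y) y := by
      have h := (Real.hasDerivAt_log (ne_of_gt (div_pos hy hB))).comp y hdiv
      refine h.congr_deriv ?_
      field_simp
    have hfun : (fun v' => x₁ v' t)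
        = fun v' => (Real.log (v' / B) + (r * (T - t) + w t / 2)) / Real.sqrt (w t) := by
      funext v'; rw [hx₁]; ring
    rw [hfun]
    have h := (hlog.add_const (r * (T - t) + w t / 2)).div_const (Real.sqrt (w t))
    refine h.congr_deriv ?_
    rw [div_div]
  have hx2v : ∀ y : ℝ, 0 < y → HasDerivAt (fun v' => x₂ v' t) (1 / (y * Real.sqrt (w t))) y := by
    intro y hy
    have hfun : (fun v' => x₂ v' t) = fun v' => x₁ v' t - Real.sqrt (w t) :=
      funext fun v' => hx₂ v' t
    rw [hfun]; exact (hx1v y hy).sub_const _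
  have hPhi1v : ∀ y : ℝ, 0 < y → HasDerivAt (fun v' => Phi (-(x₁ v' t)))
      (-(c * Real.exp (-(x₁ y t) ^ 2 / 2) * (1 / (y * Real.sqrt (w t))))) y := by
    intro y hy
    have h := (hasDerivAt_Phi (-(x₁ y t))).comp y ((hx1v y hy).neg)
    refine h.congr_deriv ?_
    rw [neg_sq]; ring
  have hPhi2v : ∀ y : ℝ, 0 < y → HasDerivAt (fun v' => Phi (-(x₂ v' t)))
      (-(c * Real.exp (-(x₂ y t) ^ 2 / 2) * (1 / (y * Real.sqrt (w t))))) y := by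
    intro y hy
    have h := (hasDerivAt_Phi (-(x₂ y t))).comp y ((hx2v y hy).neg)
    refine h.congr_deriv ?_
    rw [neg_sq]; ring
  -- first v-derivative of G
  have hGv : ∀ y : ℝ, 0 < y → HasDerivAt (fun v' => G v' t) (-Phi (-(x₁ y t))) y := by
    intro y hy
    have hfun : (fun v' => G v' t) = fun v' =>
        B * Real.exp (-r * (T - t)) * Phi (-(x₂ v' t)) - v' * Phi (-(x₁ v' t)) :=
      funext fun v' => hG v' t
    rw [hfun]
    have h := ((hPhi2v y hy).const_mul (B * Real.exp (-r * (T - t)))).sub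
      ((hasDerivAt_id y).mul (hPhi1v y hy))
    refine h.congr_deriv ?_
    have hk := key y hy
    have hE2 : Real.exp (-(x₂ y t) ^ 2 / 2)
        = y * Real.exp (-(x₁ y t) ^ 2 / 2) / (B * Real.exp (-r * (T - t))) := by
      rw [eq_div_iff (by positivity)]; linear_combination hk
    rw [hE2, id]
    field_simp
    ring
  -- second v-derivative
  have hderiv2 : deriv (fun v' => deriv (fun v'' => G v'' t) v') v
      = c * Real.exp (-(x₁ v t) ^ 2 / 2) * (1 / (v * Real.sqrt (w t))) := by
    have hev : (fun v' => deriv (fun v'' => G v'' t) v') =ᶠ[nhds v]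
        fun v' => -Phi (-(x₁ v' t)) := by
      filter_upwards [Ioi_mem_nhds hv0] with y hy
      exact (hGv y hy).deriv
    rw [hev.deriv_eq, HasDerivAt.deriv (f := fun v' => -Phi (-(x₁ v' t))) (hPhi1v v hv0).neg]
    ring
  -- t-derivatives
  have hwd : HasDerivAt w (-(σ t) ^ 2) t := by
    have hc2 : Continuous (fun u : ℝ => (σ u) ^ 2) := hσ.pow 2
    have hfun : w = fun t' => -(∫ u in T..t', (σ u) ^ 2) := by
      funext t'; rw [hw, intervalIntegral.integral_symm]
    rw [hfun]
    exact (integral_hasDerivAt_right (hc2.intervalIntegrable _ _)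
      (hc2.stronglyMeasurableAtFilter _ _) hc2.continuousAt).neg
  have hsd : HasDerivAt (fun t' => Real.sqrt (w t'))
      (1 / (2 * Real.sqrt (w t)) * (-(σ t) ^ 2)) t :=
    (Real.hasDerivAt_sqrt hW.ne').comp t hwd
  obtain ⟨d1, hx1t⟩ : ∃ d, HasDerivAt (fun t' => x₁ v t') d t := by
    have h1 : HasDerivAt (fun t' : ℝ => T - t') (0 - 1) t :=
      (hasDerivAt_const t T).sub (hasDerivAt_id t)
    have hnum : HasDerivAt (fun t' => Real.log (v / B) + r * (T - t') + w t' / 2)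
        (r * (0 - 1) + (-(σ t) ^ 2) / 2) t :=
      ((h1.const_mul r).const_add (Real.log (v / B))).add (hwd.div_const 2)
    have hfun : (fun t' => x₁ v t')
        = fun t' => (Real.log (v / B) + r * (T - t') + w t' / 2) / Real.sqrt (w t') :=
      funext fun t' => hx₁ v t'
    rw [hfun]
    exact ⟨_, hnum.div hsd hs0.ne'⟩
  have hx2t : HasDerivAt (fun t' => x₂ v t')
      (d1 - 1 / (2 * Real.sqrt (w t)) * (-(σ t) ^ 2)) t := by
    have hfun : (fun t' => x₂ v t') = fun t' => x₁ v t' - Real.sqrt (w t') :=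
      funext fun t' => hx₂ v t'
    rw [hfun]; exact hx1t.sub hsd
  have hexp : HasDerivAt (fun t' => Real.exp (-r * (T - t'))) (Real.exp (-r * (T - t)) * r) t := by
    have hi : HasDerivAt (fun t' : ℝ => -r * (T - t')) r t := by
      have h1 : HasDerivAt (fun t' : ℝ => T - t') (0 - 1) t :=
        (hasDerivAt_const t T).sub (hasDerivAt_id t)
      have h2 := h1.const_mul (-r)
      refine h2.congr_deriv ?_; ring
    exact (Real.hasDerivAt_exp _).comp t hi
  have hPhi1t : HasDerivAt (fun t' => Phi (-(x₁ v t')))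
      (-(c * Real.exp (-(x₁ v t) ^ 2 / 2) * d1)) t := by
    have h := (hasDerivAt_Phi (-(x₁ v t))).comp t hx1t.neg
    refine h.congr_deriv ?_
    rw [neg_sq]; ring
  have hPhi2t : HasDerivAt (fun t' => Phi (-(x₂ v t')))
      (-(c * Real.exp (-(x₂ v t) ^ 2 / 2)
        * (d1 - 1 / (2 * Real.sqrt (w t)) * (-(σ t) ^ 2)))) t := by
    have h := (hasDerivAt_Phi (-(x₂ v t))).comp t hx2t.neg
    refine h.congr_deriv ?_
    rw [neg_sq]; ring
  have hGt : HasDerivAt (fun t' => G v t')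
      (((B * (Real.exp (-r * (T - t)) * r)) * Phi (-(x₂ v t))
          + (B * Real.exp (-r * (T - t)))
            * (-(c * Real.exp (-(x₂ v t) ^ 2 / 2)
                * (d1 - 1 / (2 * Real.sqrt (w t)) * (-(σ t) ^ 2)))))
        - v * (-(c * Real.exp (-(x₁ v t) ^ 2 / 2) * d1))) t := by
    have hfun : (fun t' => G v t') = fun t' =>
        B * Real.exp (-r * (T - t')) * Phi (-(x₂ v t')) - v * Phi (-(x₁ v t')) :=
      funext fun t' => hG v t'
    rw [hfun]
    exact ((hexp.const_mul B).mul hPhi2t).sub (hPhi1t.const_mul v)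
  -- assemble
  rw [hderiv2, (hGv v hv0).deriv, hGt.deriv, hG v t]
  have hk := key v hv0
  have hE2 : Real.exp (-(x₂ v t) ^ 2 / 2)
      = v * Real.exp (-(x₁ v t) ^ 2 / 2) / (B * Real.exp (-r * (T - t))) := by
    rw [eq_div_iff (by positivity)]; linear_combination hk
  rw [hE2]
  field_simp
  ring
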